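/- arXiv:2007.01341 — 4 statements merged into one kernel-verified Lean document; each statement's English description precedes it below -/
import Mathlib

section
/- Let $a,b:\mathbb{R}\to\mathbb{R}$ be continuous $T$-periodic functions with $a(t)>0$ and $b(t)>0$ for all $t$. Then there exists a unique positive $T$-periodic function $M$ solving the Bernoulli-type equation $M'(t)/M(t) + b(t)M(t) = a(t)$. -/
/-!
The substitution `u = 1 / M` turns the equation into the linear equation `u' = b - a u`.
With the integrating factor `μ t = exp (∫₀ᵗ a)` one has `(μ u)' = μ b` and `μ (t + T) = μ T * μ t`,
where `μ T > 1`. Hence `u t = (∫ₜ^{t+T} μ b) / ((μ T - 1) μ t)` is a periodic solution, and it is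
positive. If `u, v` both solve the linear equation with `u T = u 0`, `v T = v 0`, then `μ (u - v)`
is constant, and `μ T ≠ 1` forces it to vanish; this gives uniqueness.
-/

open Real intervalIntegral Function

noncomputable def integratingFactor (a : ℝ → ℝ) (t : ℝ) : ℝ :=
  exp (∫ s in (0 : ℝ)..t, a s)

noncomputable def periodicSolution (a b : ℝ → ℝ) (T t : ℝ) : ℝ :=
  (∫ s in t..t + T, integratingFactor a s * b s) /
    ((integratingFactor a T - 1) * integratingFactor a t)

section

variable {a b : ℝ → ℝ} {T : ℝ}

theorem integratingFactor_pos (t : ℝ) : 0 < integratingFactor a t :=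
  exp_pos _

theorem integratingFactor_zero : integratingFactor a 0 = 1 := by
  simp [integratingFactor]

theorem hasDerivAt_integratingFactor (ha : Continuous a) (t : ℝ) :
    HasDerivAt (integratingFactor a) (integratingFactor a t * a t) t :=
  (ha.integral_hasStrictDerivAt 0 t).hasDerivAt.exp

theorem continuous_integratingFactor (ha : Continuous a) : Continuous (integratingFactor a) :=
  Differentiable.continuous fun t => (hasDerivAt_integratingFactor ha t).differentiableAt

theorem integratingFactor_eq_one_iff (T : ℝ) :
    integratingFactor a T = 1 ↔ ∫ s in (0 : ℝ)..T, a s = 0 :=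
  exp_eq_one_iff _

theorem integratingFactor_add_period (ha : Continuous a) (hpa : Periodic a T) (t : ℝ) :
    integratingFactor a (t + T) = integratingFactor a T * integratingFactor a t := by
  have := hpa.intervalIntegral_add_eq_add 0 t fun _ _ => ha.intervalIntegrable _ _
  rw [zero_add] at this
  rw [integratingFactor, integratingFactor, integratingFactor, this, add_comm, exp_add]

theorem integral_integratingFactor_mul_add_period (ha : Continuous a) (hpa : Periodic a T)
    (hpb : Periodic b T) (t : ℝ) :
    ∫ s in t + T..t + T + T, integratingFactor a s * b s =
      integratingFactor a T * ∫ s in t..t + T, integratingFactor a s * b s := by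
  rw [← integral_const_mul, ← integral_comp_add_right]
  simp only [integratingFactor_add_period ha hpa, hpb _, mul_assoc]

theorem hasDerivAt_integral_add_period {g : ℝ → ℝ} (hg : Continuous g) (T t : ℝ) :
    HasDerivAt (fun t => ∫ s in t..t + T, g s) (g (t + T) - g t) t := by
  have hG (x : ℝ) := (hg.integral_hasStrictDerivAt 0 x).hasDerivAt
  have h := ((hG (t + T)).comp_add_const t T).sub (hG t)
  refine h.congr_of_eventuallyEq (Filter.Eventually.of_forall fun x => ?_)
  exact (integral_interval_sub_left (hg.intervalIntegrable _ _) (hg.intervalIntegrable _ _)).symm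

theorem periodicSolution_periodic (ha : Continuous a) (hpa : Periodic a T) (hpb : Periodic b T) :
    Periodic (periodicSolution a b T) T := by
  intro t
  have hμT := (integratingFactor_pos (a := a) T).ne'
  rw [periodicSolution, periodicSolution, integral_integratingFactor_mul_add_period ha hpa hpb,
    integratingFactor_add_period ha hpa, mul_left_comm, mul_div_mul_left _ _ hμT]

theorem periodicSolution_pos (ha : Continuous a) (hb : Continuous b) (hT : 0 < T)
    (hbpos : ∀ t, 0 < b t) (hc : 0 < ∫ s in (0 : ℝ)..T, a s) (t : ℝ) :
    0 < periodicSolution a b T t := by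
  have hμT : 1 < integratingFactor a T := one_lt_exp_iff.2 hc
  refine div_pos ?_ (mul_pos (by linarith) (integratingFactor_pos t))
  exact intervalIntegral_pos_of_pos
    (((continuous_integratingFactor ha).mul hb).intervalIntegrable _ _)
    (fun s => mul_pos (integratingFactor_pos s) (hbpos s)) (by linarith)

theorem hasDerivAt_periodicSolution (ha : Continuous a) (hb : Continuous b) (hpa : Periodic a T)
    (hpb : Periodic b T) (hc : ∫ s in (0 : ℝ)..T, a s ≠ 0) (t : ℝ) :
    HasDerivAt (periodicSolution a b T) (b t - a t * periodicSolution a b T t) t := by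
  have hμT : integratingFactor a T - 1 ≠ 0 :=
    sub_ne_zero.2 fun h => hc ((integratingFactor_eq_one_iff T).1 h)
  have hμ := (integratingFactor_pos (a := a) t).ne'
  have hN := hasDerivAt_integral_add_period (g := fun s => integratingFactor a s * b s)
    ((continuous_integratingFactor ha).mul hb) T t
  have hD := (hasDerivAt_integratingFactor ha t).const_mul (integratingFactor a T - 1)
  refine (hN.div hD (mul_ne_zero hμT hμ)).congr_deriv ?_
  rw [periodicSolution, integratingFactor_add_period ha hpa, hpb]
  field_simp

theorem eq_of_hasDerivAt_sub_mul (ha : Continuous a) (hc : ∫ s in (0 : ℝ)..T, a s ≠ 0)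
    {u v : ℝ → ℝ} (hu : ∀ t, HasDerivAt u (b t - a t * u t) t)
    (hv : ∀ t, HasDerivAt v (b t - a t * v t) t) (huT : u T = u 0) (hvT : v T = v 0) :
    u = v := by
  set w : ℝ → ℝ := fun t => integratingFactor a t * (u t - v t)
  have hw (t : ℝ) : HasDerivAt w 0 t := by
    refine ((hasDerivAt_integratingFactor ha t).mul ((hu t).sub (hv t))).congr_deriv ?_
    rw [Pi.sub_apply]
    ring
  have hw_const (t : ℝ) : w t = w 0 :=
    is_const_of_deriv_eq_zero (fun x => (hw x).differentiableAt) (fun x => (hw x).deriv) t 0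
  have hμT : integratingFactor a T ≠ 1 := mt (integratingFactor_eq_one_iff T).1 hc
  have hw0 : w 0 = 0 := by
    have h : (integratingFactor a T - 1) * w 0 = 0 := by
      have hwT := hw_const T
      simp only [w, huT, hvT, integratingFactor_zero] at hwT ⊢
      linear_combination hwT
    exact (mul_eq_zero.1 h).resolve_left (sub_ne_zero.2 hμT)
  funext t
  have h := hw_const t
  rw [hw0] at h
  simpa [w, (integratingFactor_pos t).ne', sub_eq_zero] using h

end

theorem bernoulli_inv_of_hasDerivAt {u : ℝ → ℝ} {t α β : ℝ} (hu0 : u t ≠ 0)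
    (hu : HasDerivAt u (β - α * u t) t) :
    deriv u⁻¹ t / u⁻¹ t + β * u⁻¹ t = α := by
  rw [(hu.inv hu0).deriv, Pi.inv_apply]
  field_simp
  ring

theorem hasDerivAt_inv_of_bernoulli {M : ℝ → ℝ} {t α β : ℝ} (hM0 : M t ≠ 0)
    (hM : DifferentiableAt ℝ M t) (h : deriv M t / M t + β * M t = α) :
    HasDerivAt M⁻¹ (β - α * (M t)⁻¹) t := by
  refine (hM.hasDerivAt.inv hM0).congr_deriv ?_
  rw [← h]
  field_simp
  ring

theorem contDiff_one_of_hasDerivAt {f f' : ℝ → ℝ} (hf : ∀ t, HasDerivAt f (f' t) t)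
    (hf' : Continuous f') : ContDiff ℝ 1 f :=
  contDiff_one_iff_deriv.2 ⟨fun t => (hf t).differentiableAt, by
    rwa [show deriv f = f' from funext fun t => (hf t).deriv]⟩

/-- Existence and uniqueness of a positive `T`-periodic solution of the
Bernoulli-type equation `M'/M + b M = a`. -/
theorem bernoulli_periodic_exists_unique
    (T : ℝ) (hT : 0 < T) (a b : ℝ → ℝ)
    (ha : Continuous a) (hb : Continuous b)
    (hpa : Function.Periodic a T) (hpb : Function.Periodic b T)
    (hapos : ∀ t, 0 < a t) (hbpos : ∀ t, 0 < b t) :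
    ∃! M : ℝ → ℝ, (∀ t, 0 < M t) ∧ Function.Periodic M T ∧
      ContDiff ℝ 1 M ∧ ∀ t, deriv M t / M t + b t * M t = a t := by
  have hc : 0 < ∫ s in (0 : ℝ)..T, a s :=
    intervalIntegral_pos_of_pos (ha.intervalIntegrable 0 T) hapos hT
  set u := periodicSolution a b T
  have hu (t : ℝ) : HasDerivAt u (b t - a t * u t) t :=
    hasDerivAt_periodicSolution ha hb hpa hpb hc.ne' t
  have hu_pos : ∀ t, 0 < u t := periodicSolution_pos ha hb hT hbpos hc
  have hu_per : Periodic u T := periodicSolution_periodic ha hpa hpb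
  have hu_cont : Continuous u := Differentiable.continuous fun t => (hu t).differentiableAt
  refine ⟨u⁻¹, ⟨fun t => inv_pos.2 (hu_pos t), hu_per.comp Inv.inv, ?_,
    fun t => bernoulli_inv_of_hasDerivAt (hu_pos t).ne' (hu t)⟩, ?_⟩
  · exact (contDiff_one_of_hasDerivAt hu (hb.sub (ha.mul hu_cont))).inv fun t => (hu_pos t).ne'
  rintro N ⟨hN_pos, hN_per, hN_cd, hN_eq⟩
  have hN (t : ℝ) : HasDerivAt N⁻¹ (b t - a t * N⁻¹ t) t :=
    hasDerivAt_inv_of_bernoulli (hN_pos t).ne' (hN_cd.differentiable one_ne_zero t) (hN_eq t)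
  refine inv_eq_iff_eq_inv.1 (eq_of_hasDerivAt_sub_mul ha hc.ne' hN hu ?_ ?_)
  · simpa using congrArg Inv.inv (hN_per 0)
  · simpa using hu_per 0
end

section
/- With $r,K,M,\tilde K$ as in the IFD construction and assuming $K(x,t) > (K/r)(x,t)\,M'(t)/M(t)$ for all $(x,t)$, the function $\theta^*(x,t)=M(t)\tilde K(x,t)$ is positive and satisfies the fitness-equilibration identity $r(x,t)\left(1-\frac{\theta^*(x,t)}{K(x,t)}\right) = \frac{M'(t)}{M(t)}$ for all $(x,t)$; in particular the fitness $r(1-\theta^*/K)$ is independent of $x$. -/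
/-! Multiplying `K̃` by `M` gives `θ* = K - (K/r) M'/M`, which is positive exactly by the
feasibility condition; substituting it into `r (1 - θ*/K)` leaves `M'/M`. -/

lemma mul_div_sub_mul_div_sq {M K c m : ℝ} (hM : M ≠ 0) :
    M * (K / M - c * (m / M ^ 2)) = K - c * (m / M) := by
  field_simp

lemma mul_one_sub_sub_mul_div_self {r K g : ℝ} (hr : r ≠ 0) (hK : K ≠ 0) :
    r * (1 - (K - K / r * g) / K) = g := by
  field_simp
  ring

theorem theta_star_is_IFD_general
    {n : ℕ} (r K : (Fin n → ℝ) → ℝ → ℝ)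
    (hrpos : ∀ x t, 0 < r x t) (hKpos : ∀ x t, 0 < K x t)
    (M : ℝ → ℝ) (hMpos : ∀ t, 0 < M t)
    (Ktilde : (Fin n → ℝ) → ℝ → ℝ)
    (hKt : ∀ x t, Ktilde x t = K x t / M t - (K x t / r x t) * (deriv M t / (M t) ^ 2))
    (hcond : ∀ x t, K x t > (K x t / r x t) * (deriv M t / M t)) :
    (∀ x t, 0 < M t * Ktilde x t) ∧
    (∀ x t, r x t * (1 - M t * Ktilde x t / K x t) = deriv M t / M t) := by
  have theta_star_eq : ∀ x t,
      M t * Ktilde x t = K x t - K x t / r x t * (deriv M t / M t) := fun x t => by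
    rw [hKt, mul_div_sub_mul_div_sq (hMpos t).ne']
  refine ⟨fun x t => ?_, fun x t => ?_⟩
  · rw [theta_star_eq]
    exact sub_pos.mpr (hcond x t)
  · rw [theta_star_eq]
    exact mul_one_sub_sub_mul_div_self (hrpos x t).ne' (hKpos x t).ne'

/-- Under the feasibility condition `K > (K/r) M'/M`, the distribution
`θ* = M K̃` is positive and equilibrates the fitness:
`r (1 - θ*/K) = M'/M`, which is independent of `x`. -/
theorem theta_star_is_IFD
    {n : ℕ} (T : ℝ) (hT : 0 < T) (r K : (Fin n → ℝ) → ℝ → ℝ)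
    (hrpos : ∀ x t, 0 < r x t) (hKpos : ∀ x t, 0 < K x t)
    (hrper : ∀ x, Function.Periodic (r x) T)
    (hKper : ∀ x, Function.Periodic (K x) T)
    (M : ℝ → ℝ) (hMpos : ∀ t, 0 < M t) (hMper : Function.Periodic M T)
    (hM : ContDiff ℝ 1 M)
    (Ktilde : (Fin n → ℝ) → ℝ → ℝ)
    (hKt : ∀ x t, Ktilde x t = K x t / M t - (K x t / r x t) * (deriv M t / (M t) ^ 2))
    (hcond : ∀ x t, K x t > (K x t / r x t) * (deriv M t / M t)) :
    (∀ x t, 0 < M t * Ktilde x t) ∧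
    (∀ x t, r x t * (1 - M t * Ktilde x t / K x t) = deriv M t / M t) :=
  theta_star_is_IFD_general r K hrpos hKpos M hMpos Ktilde hKt hcond
end

section
/- If $r(x,t)\equiv 1$, then the unique positive $T$-periodic solution $M$ of $\overline{K}/M - \overline{(K/r)}\,M'/M^2 = 1$ satisfies $r(x,t) > M'(t)/M(t)$ automatically, and the corresponding IFD is $\theta^*(x,t) = \frac{M(t)}{\overline K(t)} K(x,t)$, i.e. $\theta^*$ is proportional in space to $K$ for each fixed time. -/
open MeasureTheory

/-- Spatial average of `f(·, t)` over `Ω`. -/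
noncomputable def spAvg {n : ℕ} (Ω : Set (Fin n → ℝ))
    (f : (Fin n → ℝ) → ℝ → ℝ) (t : ℝ) : ℝ :=
  (volume Ω).toReal⁻¹ * ∫ x in Ω, f x t

/-!
Positivity of `K` makes the average `K̄` positive. Clearing denominators, the Bernoulli relation
`K̄/M - K̄ M'/M² = 1` reads `K̄ (M - M') = M²`, so `M - M' > 0`, and substituting
`M - M' = M²/K̄` into `θ* = K (M - M')/M` gives `θ* = (M/K̄) K`.
-/

theorem spAvg_pos {n : ℕ} {Ω : Set (Fin n → ℝ)} (hΩ : Bornology.IsBounded Ω)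
    (hΩ0 : 0 < volume Ω) (hΩfin : volume Ω < ⊤) {f : (Fin n → ℝ) → ℝ → ℝ} {t : ℝ}
    (hf : Continuous fun x => f x t) (hfpos : ∀ x, 0 < f x t) : 0 < spAvg Ω f t := by
  have hint : IntegrableOn (fun x => f x t) Ω :=
    (hf.continuousOn.integrableOn_compact hΩ.isCompact_closure).mono_set subset_closure
  have hsupport : Function.support (fun x => f x t) ∩ Ω = Ω := by
    simp [Function.support, fun x => (hfpos x).ne']
  have hintegral : 0 < ∫ x in Ω, f x t := by
    rw [setIntegral_pos_iff_support_of_nonneg_ae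
      (Filter.Eventually.of_forall fun x => (hfpos x).le) hint, hsupport]
    exact hΩ0
  exact mul_pos (inv_pos.mpr (ENNReal.toReal_pos hΩ0.ne' hΩfin.ne)) hintegral

section Bernoulli

variable {A m m' : ℝ}

theorem sub_eq_sq_div_of_bernoulli (hA : A ≠ 0) (hm : m ≠ 0)
    (h : A / m - A * m' / m ^ 2 = 1) : m - m' = m ^ 2 / A := by
  field_simp at h ⊢
  linear_combination h

theorem div_lt_one_of_bernoulli (hA : 0 < A) (hm : 0 < m)
    (h : A / m - A * m' / m ^ 2 = 1) : m' / m < 1 := by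
  have hdiff : 0 < m - m' := by
    rw [sub_eq_sq_div_of_bernoulli hA.ne' hm.ne' h]
    positivity
  rw [div_lt_one hm]
  linarith

theorem ifd_eq_of_bernoulli (k : ℝ) (hA : A ≠ 0) (hm : m ≠ 0)
    (h : A / m - A * m' / m ^ 2 = 1) : m * (k / m - k * (m' / m ^ 2)) = m / A * k := by
  have hdiff := sub_eq_sq_div_of_bernoulli hA hm h
  calc m * (k / m - k * (m' / m ^ 2)) = k * (m - m') / m := by field_simp
    _ = m / A * k := by rw [hdiff]; field_simp

end Bernoulli

theorem IFD_r_equals_one_general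
    {n : ℕ} (Ω : Set (Fin n → ℝ)) (hΩ : Bornology.IsBounded Ω)
    (hΩ0 : 0 < volume Ω) (hΩfin : volume Ω < ⊤)
    (K : (Fin n → ℝ) → ℝ → ℝ)
    (hK : Continuous fun p : (Fin n → ℝ) × ℝ => K p.1 p.2)
    (hKpos : ∀ x t, 0 < K x t)
    (M : ℝ → ℝ) (hMpos : ∀ t, 0 < M t)
    (hBern : ∀ t, spAvg Ω K t / M t -
      spAvg Ω K t * deriv M t / (M t) ^ 2 = 1) :
    (∀ t, deriv M t / M t < 1) ∧
    (∀ x t, M t * (K x t / M t - K x t * (deriv M t / (M t) ^ 2)) =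
      M t / spAvg Ω K t * K x t) := by
  have hA : ∀ t, 0 < spAvg Ω K t := fun t =>
    spAvg_pos hΩ hΩ0 hΩfin (hK.comp (Continuous.prodMk_left t)) (hKpos · t)
  exact ⟨fun t => div_lt_one_of_bernoulli (hA t) (hMpos t) (hBern t),
    fun x t => ifd_eq_of_bernoulli (K x t) (hA t).ne' (hMpos t).ne' (hBern t)⟩

/-- When `r ≡ 1`, the feasibility condition holds automatically and the IFD
`θ* = M K̃` is proportional in space to `K`: `θ*(x,t) = (M(t)/K̄(t)) K(x,t)`. -/
theorem IFD_r_equals_one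
    {n : ℕ} (Ω : Set (Fin n → ℝ)) (hΩ : Bornology.IsBounded Ω)
    (hΩm : MeasurableSet Ω) (hΩ0 : 0 < volume Ω) (hΩfin : volume Ω < ⊤)
    (T : ℝ) (hT : 0 < T) (K : (Fin n → ℝ) → ℝ → ℝ)
    (hK : Continuous fun p : (Fin n → ℝ) × ℝ => K p.1 p.2)
    (hKpos : ∀ x t, 0 < K x t)
    (hKper : ∀ x, Function.Periodic (K x) T)
    (M : ℝ → ℝ) (hMpos : ∀ t, 0 < M t) (hMper : Function.Periodic M T)
    (hM : ContDiff ℝ 1 M)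
    (hBern : ∀ t, spAvg Ω K t / M t -
      spAvg Ω K t * deriv M t / (M t) ^ 2 = 1) :
    (∀ t, deriv M t / M t < 1) ∧
    (∀ x t, M t * (K x t / M t - K x t * (deriv M t / (M t) ^ 2)) =
      M t / spAvg Ω K t * K x t) :=
  IFD_r_equals_one_general Ω hΩ hΩ0 hΩfin K hK hKpos M hMpos hBern
end

section
/- Let $\rho:\mathbb{R}\to(0,\infty)$ be continuous, $T$-periodic and non-constant, and let $M$ be the unique positive $T$-periodic solution of $M'(t)/M(t) + M(t) = \rho(t)$. Then $M'(t)/M(t)$ changes sign on $[0,T]$, i.e. there exist $t_1,t_2$ with $M'(t_1)>0$ and $M'(t_2)<0$. -/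
/-!
If `M'/M` never took both signs on `[0, T]`, then `M'` would have one sign on a period, hence
everywhere, so the periodic function `M` would be monotone and therefore constant. Then `M' = 0`
and the equation forces `ρ = M` to be constant.
-/

open Set

namespace Function.Periodic

section Order

variable {α β : Type*} [AddCommGroup α] [LinearOrder α] [IsOrderedAddMonoid α] [Archimedean α]
  {f : α → β} {c : α}

theorem forall_of_forall_mem_Icc {p : β → Prop} (hf : Periodic f c) (hc : 0 < c)
    (h : ∀ x ∈ Icc 0 c, p (f x)) (x : α) : p (f x) := by
  obtain ⟨y, hy, hyx⟩ : f x ∈ f '' Icc 0 (0 + c) := hf.image_Icc hc 0 ▸ mem_range_self x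
  rw [← hyx]
  exact h y (by simpa using hy)

theorem eq_of_monotone [PartialOrder β] (hf : Periodic f c) (hc : 0 < c) (hmono : Monotone f)
    (x y : α) : f x = f y := by
  have hle : ∀ a b, f a ≤ f b := fun a b => by
    obtain ⟨n, hn⟩ := Archimedean.arch (a - b) hc
    calc f a ≤ f (b + n • c) := hmono (sub_le_iff_le_add'.1 hn)
      _ = f b := hf.nsmul n b
  exact (hle x y).antisymm (hle y x)

theorem eq_of_antitone [PartialOrder β] (hf : Periodic f c) (hc : 0 < c) (hanti : Antitone f)
    (x y : α) : f x = f y :=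
  eq_of_monotone (β := βᵒᵈ) hf hc hanti.dual_right x y

end Order

variable {f : ℝ → ℝ} {T : ℝ}

protected theorem deriv (hf : Periodic f T) : Periodic (deriv f) T := fun t => by
  rw [← deriv_comp_add_const, show (fun x => f (x + T)) = f from funext hf]

theorem eq_of_deriv_nonneg (hf : Periodic f T) (hT : 0 < T) (hdiff : Differentiable ℝ f)
    (h : ∀ t ∈ Icc 0 T, 0 ≤ deriv f t) (x y : ℝ) : f x = f y :=
  hf.eq_of_monotone hT
    (monotone_of_deriv_nonneg hdiff (hf.deriv.forall_of_forall_mem_Icc (p := (0 ≤ ·)) hT h)) x y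

theorem eq_of_deriv_nonpos (hf : Periodic f T) (hT : 0 < T) (hdiff : Differentiable ℝ f)
    (h : ∀ t ∈ Icc 0 T, deriv f t ≤ 0) (x y : ℝ) : f x = f y :=
  hf.eq_of_antitone hT
    (antitone_of_deriv_nonpos hdiff (hf.deriv.forall_of_forall_mem_Icc (p := (· ≤ 0)) hT h)) x y

end Function.Periodic

theorem log_deriv_changes_sign_general
    (T : ℝ) (hT : 0 < T) (ρ : ℝ → ℝ)
    (hρnc : ∃ s u, ρ s ≠ ρ u)
    (M : ℝ → ℝ) (hMpos : ∀ t, 0 < M t) (hMper : Function.Periodic M T)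
    (hM : ContDiff ℝ 1 M)
    (hode : ∀ t, deriv M t / M t + M t = ρ t) :
    ∃ t₁ ∈ Set.Icc (0:ℝ) T, ∃ t₂ ∈ Set.Icc (0:ℝ) T,
      0 < deriv M t₁ / M t₁ ∧ deriv M t₂ / M t₂ < 0 := by
  by_contra! hcon
  have hsign : (∀ t ∈ Icc 0 T, 0 ≤ deriv M t) ∨ ∀ t ∈ Icc 0 T, deriv M t ≤ 0 := by
    by_cases hpos : ∃ t₁ ∈ Icc 0 T, 0 < deriv M t₁ / M t₁
    · obtain ⟨t₁, ht₁, hpos⟩ := hpos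
      exact .inl fun t ht => by simpa using (le_div_iff₀ (hMpos t)).1 (hcon t₁ ht₁ t ht hpos)
    · push Not at hpos
      exact .inr fun t ht => by simpa using (div_le_iff₀ (hMpos t)).1 (hpos t ht)
  have hdiff : Differentiable ℝ M := hM.differentiable one_ne_zero
  have hconst : ∀ x y, M x = M y :=
    hsign.elim (hMper.eq_of_deriv_nonneg hT hdiff) (hMper.eq_of_deriv_nonpos hT hdiff)
  have hM' : ∀ t, deriv M t = 0 := fun t => by
    rw [show M = fun _ => M 0 from funext (hconst · 0), deriv_const]
  obtain ⟨s, u, hsu⟩ := hρnc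
  exact hsu (by rw [← hode s, ← hode u, hM' s, hM' u, hconst s u])

/-- If `ρ` is positive, continuous, `T`-periodic and non-constant, then the
unique positive `T`-periodic solution `M` of `M'/M + M = ρ` has logarithmic
derivative `M'/M` changing sign on `[0, T]`. -/
theorem log_deriv_changes_sign
    (T : ℝ) (hT : 0 < T) (ρ : ℝ → ℝ)
    (hρ : Continuous ρ) (hρpos : ∀ t, 0 < ρ t)
    (hρper : Function.Periodic ρ T)
    (hρnc : ∃ s u, ρ s ≠ ρ u)
    (M : ℝ → ℝ) (hMpos : ∀ t, 0 < M t) (hMper : Function.Periodic M T)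
    (hM : ContDiff ℝ 1 M)
    (hode : ∀ t, deriv M t / M t + M t = ρ t) :
    ∃ t₁ ∈ Set.Icc (0:ℝ) T, ∃ t₂ ∈ Set.Icc (0:ℝ) T,
      0 < deriv M t₁ / M t₁ ∧ deriv M t₂ / M t₂ < 0 :=
  log_deriv_changes_sign_general T hT ρ hρnc M hMpos hMper hM hode
end
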